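/- Let E be a simple regular expression over an alphabet α. The deterministic automaton whose state type is Set (RegularExpression α), whose transition function sends a state S and a symbol a to ⋃_{q ∈ S} ∂ₐ(q), whose start state is {E}, and whose accepting states are the sets S containing some expression q with ε ∈ L(q), accepts exactly the language L(E). (This is the correctness of Antimirov's partial-derivative DFA, i.e., of the (D_A, B_B)-alternating automaton construction.) -/

import Mathlib

open scoped Classical

/-- The Antimirov partial derivative of a regular expression with respect to a symbol. -/
noncomputable def aderiv {α : Type*} (a : α) : RegularExpression α → Set (RegularExpression α)
  | .zero => ∅
  | .epsilon => ∅
  | .char b => if b = a then {1} else ∅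
  | .plus E₁ E₂ => aderiv a E₁ ∪ aderiv a E₂
  | .comp E₁ E₂ =>
      if [] ∈ E₁.matches' then ((· * E₂) '' aderiv a E₁) ∪ aderiv a E₂
      else (· * E₂) '' aderiv a E₁
  | .star E₁ => (· * E₁.star) '' aderiv a E₁

/-- Iterated Antimirov partial derivative with respect to a word. -/
noncomputable def aderivWord {α : Type*} : List α → RegularExpression α → Set (RegularExpression α)
  | [], E => {E}
  | a :: w, E => ⋃ F ∈ aderiv a E, aderivWord w F

/-- Left quotient of a language by a word. -/
def lquot {α : Type*} (w : List α) (L : Language α) : Language α := {v | w ++ v ∈ L}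

/-!
A set `S` of regular expressions denotes the union `L(S)` of their languages. By Antimirov's
lemma `a⁻¹ L(E) = L(∂ₐ E)`, checked constructor by constructor from the quotient rules for sums,
products and stars of languages, the transition `S ↦ ⋃_{q ∈ S} ∂ₐ q` realises the left quotient
`L(S) ↦ a⁻¹ L(S)`, and `S` is accepting iff `ε ∈ L(S)`. Hence the state reached along `w` denotes
`w⁻¹ L(E)`, which contains `ε` iff `w ∈ L(E)`.
-/

open scoped Computability

namespace Language

variable {α : Type*}

theorem leftQuotient_add (l m : Language α) (x : List α) :
    (l + m).leftQuotient x = l.leftQuotient x + m.leftQuotient x :=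
  rfl

theorem leftQuotient_iSup {ι : Sort*} (l : ι → Language α) (x : List α) :
    (⨆ i, l i).leftQuotient x = ⨆ i, (l i).leftQuotient x := by
  ext y
  simp [mem_iSup]

theorem zero_leftQuotient (x : List α) : (0 : Language α).leftQuotient x = 0 :=
  rfl

theorem one_leftQuotient_cons (a : α) (x : List α) :
    (1 : Language α).leftQuotient (a :: x) = 0 := by
  ext y
  simp [mem_one, notMem_zero]

theorem singleton_leftQuotient_singleton (a b : α) :
    ({[b]} : Language α).leftQuotient [a] = if b = a then 1 else 0 := by
  ext y
  change a :: y ∈ ({[b]} : Set (List α)) ↔ _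
  split_ifs with h
  · simp [mem_one, h]
  · simp [notMem_zero, Ne.symm h]

theorem mul_leftQuotient_singleton (l m : Language α) (a : α) :
    (l * m).leftQuotient [a] =
      l.leftQuotient [a] * m + if [] ∈ l then m.leftQuotient [a] else 0 := by
  ext y
  simp only [mem_leftQuotient, mem_add, mem_mul]
  constructor
  · rintro ⟨_ | ⟨b, x⟩, hx, z, hz, hxz⟩
    · right
      simp_all
    · obtain ⟨rfl, rfl⟩ := List.cons_eq_cons.1 hxz
      exact Or.inl ⟨x, hx, z, hz, rfl⟩
  · rintro (⟨x, hx, z, hz, rfl⟩ | h)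
    · exact ⟨a :: x, hx, z, hz, rfl⟩
    · split_ifs at h with hl
      · exact ⟨[], hl, a :: y, h, rfl⟩
      · exact absurd h (notMem_zero y)

theorem kstar_leftQuotient_singleton (l : Language α) (a : α) :
    l∗.leftQuotient [a] = l.leftQuotient [a] * l∗ := by
  ext y
  simp only [mem_leftQuotient, mem_mul, List.singleton_append]
  constructor
  · intro h
    obtain ⟨_ | ⟨w, L⟩, hL, hmem⟩ := mem_kstar_iff_exists_nonempty.1 h
    · simp at hL
    · obtain ⟨hw, hwne⟩ := hmem w List.mem_cons_self
      obtain ⟨b, x, rfl⟩ := List.exists_cons_of_ne_nil hwne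
      obtain ⟨rfl, rfl⟩ := List.cons_eq_cons.1 hL
      exact ⟨x, hw, L.flatten, join_mem_kstar fun v hv => (hmem v (.tail _ hv)).1, rfl⟩
  · rintro ⟨x, hx, z, hz, rfl⟩
    obtain ⟨L, rfl, hL⟩ := mem_kstar.1 hz
    exact mem_kstar.2 ⟨(a :: x) :: L, rfl, by simpa [hx] using hL⟩

end Language

namespace DFA

variable {α σ : Type*}

theorem acceptsFrom_eq_of_leftQuotient (M : DFA α σ) (L : σ → Language α)
    (hstep : ∀ s a, L (M.step s a) = (L s).leftQuotient [a])
    (haccept : ∀ s, s ∈ M.accept ↔ [] ∈ L s) (s : σ) :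
    M.acceptsFrom s = L s := by
  have hevalFrom : ∀ x s, L (M.evalFrom s x) = (L s).leftQuotient x := by
    intro x
    induction x with
    | nil => intro s; rfl
    | cons a x ih =>
      intro s
      rw [evalFrom_cons, ih, hstep, ← Language.leftQuotient_append, List.singleton_append]
  ext x
  rw [mem_acceptsFrom, haccept, hevalFrom, Language.mem_leftQuotient, List.append_nil]

end DFA

namespace RegularExpression

variable {α : Type*}

def setMatches (S : Set (RegularExpression α)) : Language α :=
  ⨆ q ∈ S, q.matches'

theorem mem_setMatches {S : Set (RegularExpression α)} {x : List α} :
    x ∈ setMatches S ↔ ∃ q ∈ S, x ∈ q.matches' := by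
  simp [setMatches, Language.mem_iSup]

@[simp]
theorem setMatches_empty : setMatches (∅ : Set (RegularExpression α)) = 0 :=
  iSup_emptyset

@[simp]
theorem setMatches_singleton (q : RegularExpression α) : setMatches {q} = q.matches' := by
  simp [setMatches]

@[simp]
theorem setMatches_union (S T : Set (RegularExpression α)) :
    setMatches (S ∪ T) = setMatches S + setMatches T :=
  iSup_union

@[simp]
theorem setMatches_image_mul (S : Set (RegularExpression α)) (F : RegularExpression α) :
    setMatches ((· * F) '' S) = setMatches S * F.matches' := by
  simp only [setMatches, iSup_image, matches'_mul, Language.iSup_mul]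

theorem setMatches_biUnion (S : Set (RegularExpression α))
    (T : RegularExpression α → Set (RegularExpression α)) :
    setMatches (⋃ q ∈ S, T q) = ⨆ q ∈ S, setMatches (T q) := by
  simp only [setMatches, iSup_iUnion]

open Language in
theorem matches'_leftQuotient_singleton (a : α) (E : RegularExpression α) :
    E.matches'.leftQuotient [a] = setMatches (aderiv a E) := by
  induction E with
  | zero => simp [aderiv, matches', zero_leftQuotient]
  | epsilon => simp [aderiv, matches', one_leftQuotient_cons]
  | char b =>
    simp only [aderiv, matches', singleton_leftQuotient_singleton]
    split_ifs <;> simp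
  | plus E₁ E₂ ih₁ ih₂ =>
    simp only [aderiv, matches', leftQuotient_add, setMatches_union, ih₁, ih₂]
  | comp E₁ E₂ ih₁ ih₂ =>
    simp only [aderiv, matches', mul_leftQuotient_singleton, ih₁, ih₂]
    split_ifs <;> simp
  | star E ih => simp [aderiv, matches', kstar_leftQuotient_singleton, ih]

theorem setMatches_biUnion_aderiv (S : Set (RegularExpression α)) (a : α) :
    setMatches (⋃ q ∈ S, aderiv a q) = (setMatches S).leftQuotient [a] := by
  rw [setMatches_biUnion, setMatches]
  simp_rw [Language.leftQuotient_iSup, matches'_leftQuotient_singleton]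

end RegularExpression

theorem antimirov_dfa_correct {α : Type*} (E : RegularExpression α) :
    (DFA.mk (fun S a => ⋃ q ∈ S, aderiv a q) ({E} : Set (RegularExpression α))
        {S : Set (RegularExpression α) | ∃ q ∈ S, [] ∈ q.matches'}).accepts = E.matches' := by
  refine (DFA.acceptsFrom_eq_of_leftQuotient _ RegularExpression.setMatches ?_ ?_ _).trans
    (RegularExpression.setMatches_singleton E)
  · exact RegularExpression.setMatches_biUnion_aderiv
  · exact fun S => RegularExpression.mem_setMatches.symm
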